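/- arXiv:0707.0218 — 2 statements merged into one kernel-verified Lean document; each statement's English description precedes it below -/
import Mathlib

section
/- Let v : B → ℝ be a function on the unit cube B such that all mixed partial derivatives D^α v with α ∈ Zⁿ = {0,1}ⁿ exist and are continuous on B. If f_α = D^α v for all α ∈ Zⁿ, then K({f_α}_{α ∈ Zⁿ}) = v; that is, the reconstruction operator K applied to the family of mixed partial derivatives of v of order at most one in each variable recovers v. -/
/-- The unit cube `B = {x ∈ ℝⁿ : ‖x‖_∞ ≤ 1}`. -/
def cubeB (n : ℕ) : Set (Fin n → ℝ) := {x | ∀ i, |x i| ≤ 1}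

/-- The operator `g_{i,j}`: for `j = 0`, evaluation at `x_i = 0`; for `j = 1`,
integration `∫₀^{x_i}` in the `i`-th variable. -/
noncomputable def gop (n : ℕ) (i : Fin n) (j : ℕ) (h : (Fin n → ℝ) → ℝ) :
    (Fin n → ℝ) → ℝ :=
  fun x => if j = 0 then h (Function.update x i 0)
    else ∫ s in (0:ℝ)..(x i), h (Function.update x i s)

/-- `G_α = g_{1,α₁} ∘ g_{2,α₂} ∘ ⋯ ∘ g_{n,αₙ}`. -/
noncomputable def Gop (n : ℕ) (α : Fin n → ℕ) (h : (Fin n → ℝ) → ℝ) :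
    (Fin n → ℝ) → ℝ :=
  (List.finRange n).foldr (fun i g => gop n i (α i) g) h

/-- `Zⁿ = {α ∈ ℕⁿ : α_i ∈ {0,1}}`. -/
def Zn (n : ℕ) : Finset (Fin n → ℕ) := Fintype.piFinset fun _ => ({0, 1} : Finset ℕ)

/-- The reconstruction operator `K({f_α}_{α ∈ Zⁿ}) = ∑_{α ∈ Zⁿ} G_α f_α`. -/
noncomputable def Kop (n : ℕ) (F : (Fin n → ℕ) → (Fin n → ℝ) → ℝ) :
    (Fin n → ℝ) → ℝ :=
  fun x => ∑ α ∈ Zn n, Gop n α (F α) x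

/-!
In one variable the statement is the fundamental theorem of calculus,
`h x = h (x with xᵢ = 0) + ∫₀^{xᵢ} ∂ᵢh`. Applying it in the coordinates `1, …, n` in turn, each
time to every term produced so far, expands `v` into `2ⁿ` terms, and the term in which exactly the
coordinates `i` with `αᵢ = 1` were integrated is `G_α (D^α v)`; the induction is over the list of
coordinates still to be expanded. Continuity of the integrands on `B` comes from the retraction `r`
of `ℝⁿ` onto `B`: `G_α h` agrees on `B` with `G_α (h ∘ r)`, which is continuous everywhere.
-/

open Function

variable {n : ℕ}

lemma mem_Zn_iff {α : Fin n → ℕ} : α ∈ Zn n ↔ ∀ i, α i = 0 ∨ α i = 1 := by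
  simp [Zn, Fintype.mem_piFinset]

lemma add_single_mem_Zn {α : Fin n → ℕ} (hα : α ∈ Zn n) {i : Fin n} (hi : α i = 0) :
    α + Pi.single i 1 ∈ Zn n := by
  rw [mem_Zn_iff] at hα ⊢
  intro j
  rcases eq_or_ne j i with rfl | hj
  · simp [hi]
  · simpa [hj] using hα j

section Cube

lemma update_mem_cubeB {x : Fin n → ℝ} (hx : x ∈ cubeB n) (i : Fin n) {s : ℝ} (hs : |s| ≤ 1) :
    update x i s ∈ cubeB n := by
  intro j
  rcases eq_or_ne j i with rfl | hj
  · simpa using hs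
  · simpa [hj] using hx j

lemma update_mem_cubeB_of_mem_uIcc {x : Fin n → ℝ} (hx : x ∈ cubeB n) (i : Fin n) {s : ℝ}
    (hs : s ∈ Set.uIcc 0 (x i)) : update x i s ∈ cubeB n :=
  update_mem_cubeB hx i <|
    (by simpa using Set.abs_sub_left_of_mem_uIcc hs : |s| ≤ |x i|).trans (hx i)

noncomputable def projCubeB (x : Fin n → ℝ) : Fin n → ℝ := fun i => max (-1) (min (x i) 1)

lemma continuous_projCubeB : Continuous (projCubeB (n := n)) := by
  unfold projCubeB
  fun_prop

lemma projCubeB_mem (x : Fin n → ℝ) : projCubeB x ∈ cubeB n :=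
  fun i => abs_le.2 ⟨le_max_left _ _, max_le (by norm_num) (min_le_right _ _)⟩

lemma projCubeB_of_mem {x : Fin n → ℝ} (hx : x ∈ cubeB n) : projCubeB x = x := by
  funext i
  obtain ⟨hle, hge⟩ := abs_le.1 (hx i)
  simp [projCubeB, min_eq_left hge, max_eq_right hle]

lemma ContinuousOn.intervalIntegrable_comp_update {g : (Fin n → ℝ) → ℝ}
    (hg : ContinuousOn g (cubeB n)) {x : Fin n → ℝ} (hx : x ∈ cubeB n) (i : Fin n) :
    IntervalIntegrable (fun s => g (update x i s)) MeasureTheory.volume 0 (x i) :=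
  ContinuousOn.intervalIntegrable <| hg.comp (by fun_prop) fun _ hs =>
    update_mem_cubeB_of_mem_uIcc hx i hs

end Cube

section GopList

noncomputable def GopList (L : List (Fin n)) (α : Fin n → ℕ) (h : (Fin n → ℝ) → ℝ) :
    (Fin n → ℝ) → ℝ :=
  L.foldr (fun i g => gop n i (α i) g) h

lemma Gop_eq_GopList (α : Fin n → ℕ) (h : (Fin n → ℝ) → ℝ) :
    Gop n α h = GopList (List.finRange n) α h := rfl

@[simp]
lemma GopList_nil (α : Fin n → ℕ) (h : (Fin n → ℝ) → ℝ) : GopList [] α h = h := rfl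

lemma GopList_cons (i : Fin n) (L : List (Fin n)) (α : Fin n → ℕ) (h : (Fin n → ℝ) → ℝ) :
    GopList (i :: L) α h = gop n i (α i) (GopList L α h) := rfl

lemma gop_zero (i : Fin n) (h : (Fin n → ℝ) → ℝ) (x : Fin n → ℝ) :
    gop n i 0 h x = h (update x i 0) := rfl

lemma gop_one (i : Fin n) (h : (Fin n → ℝ) → ℝ) (x : Fin n → ℝ) :
    gop n i 1 h x = ∫ s in (0 : ℝ)..x i, h (update x i s) := rfl

lemma continuous_gop (i : Fin n) (j : ℕ) {h : (Fin n → ℝ) → ℝ} (hh : Continuous h) :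
    Continuous (gop n i j h) := by
  unfold gop
  split_ifs
  · fun_prop
  · exact intervalIntegral.continuous_parametric_intervalIntegral_of_continuous
      (f := fun x s => h (update x i s)) (by fun_prop) (continuous_apply i)

lemma continuous_GopList (L : List (Fin n)) (α : Fin n → ℕ) {h : (Fin n → ℝ) → ℝ}
    (hh : Continuous h) : Continuous (GopList L α h) := by
  induction L with
  | nil => exact hh
  | cons i L ih => exact continuous_gop i (α i) ih

lemma GopList_eqOn (L : List (Fin n)) (α : Fin n → ℕ) {h₁ h₂ : (Fin n → ℝ) → ℝ}
    (hh : Set.EqOn h₁ h₂ (cubeB n)) : Set.EqOn (GopList L α h₁) (GopList L α h₂) (cubeB n) := by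
  induction L with
  | nil => exact hh
  | cons i L ih =>
    intro x hx
    simp only [GopList_cons, gop]
    split_ifs
    · exact ih (update_mem_cubeB hx i (by norm_num))
    · exact intervalIntegral.integral_congr fun s hs => ih (update_mem_cubeB_of_mem_uIcc hx i hs)

lemma continuousOn_GopList (L : List (Fin n)) (α : Fin n → ℕ) {h : (Fin n → ℝ) → ℝ}
    (hh : ContinuousOn h (cubeB n)) : ContinuousOn (GopList L α h) (cubeB n) := by
  have hext : Set.EqOn h (h ∘ projCubeB) (cubeB n) := fun x hx => by simp [projCubeB_of_mem hx]
  exact (continuous_GopList L α (hh.comp_continuous continuous_projCubeB projCubeB_mem)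
    |>.continuousOn).congr (GopList_eqOn L α hext)

end GopList

section Indicator

def indNat (T : Finset (Fin n)) : Fin n → ℕ := fun i => if i ∈ T then 1 else 0

@[simp]
lemma indNat_empty : indNat (∅ : Finset (Fin n)) = 0 := by
  funext j
  simp [indNat]

lemma add_indNat_mem_Zn {α : Fin n → ℕ} (hα : α ∈ Zn n) {T : Finset (Fin n)}
    (h : ∀ j ∈ T, α j = 0) : α + indNat T ∈ Zn n := by
  rw [mem_Zn_iff] at hα ⊢
  intro j
  by_cases hj : j ∈ T
  · simp [indNat, hj, h j hj]
  · simpa [indNat, hj] using hα j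

lemma add_indNat_insert {α : Fin n → ℕ} {i : Fin n} {T : Finset (Fin n)} (hi : i ∉ T) :
    α + indNat (insert i T) = α + Pi.single i 1 + indNat T := by
  funext j
  rcases eq_or_ne j i with rfl | hj
  · simp [indNat, hi]
  · simp [indNat, hj]

lemma GopList_cons_add_indNat_of_not_mem {α : Fin n → ℕ} {i : Fin n} (hαi : α i = 0)
    {T : Finset (Fin n)} (hi : i ∉ T) (L : List (Fin n)) (h : (Fin n → ℝ) → ℝ) (x : Fin n → ℝ) :
    GopList (i :: L) (α + indNat T) h x = GopList L (α + indNat T) h (update x i 0) := by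
  have : (α + indNat T) i = 0 := by simp [indNat, hi, hαi]
  rw [GopList_cons, this, gop_zero]

lemma GopList_cons_add_indNat_insert {α : Fin n → ℕ} {i : Fin n} (hαi : α i = 0)
    {T : Finset (Fin n)} (hi : i ∉ T) (L : List (Fin n)) (h : (Fin n → ℝ) → ℝ) (x : Fin n → ℝ) :
    GopList (i :: L) (α + indNat (insert i T)) h x =
      ∫ s in (0 : ℝ)..x i, GopList L (α + Pi.single i 1 + indNat T) h (update x i s) := by
  have : (α + indNat (insert i T)) i = 1 := by simp [indNat, hαi]
  rw [GopList_cons, this, gop_one, add_indNat_insert hi]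

lemma indNat_injective : Injective (indNat (n := n)) := by
  intro S T h
  ext j
  have hj := congrFun h j
  simp only [indNat] at hj
  split_ifs at hj <;> simp_all

lemma image_indNat_powerset_univ : (Finset.univ.powerset.image indNat) = Zn n := by
  ext α
  simp only [Finset.mem_image, Finset.mem_powerset, Finset.subset_univ, true_and, mem_Zn_iff]
  refine ⟨?_, fun hα => ⟨Finset.univ.filter (α · = 1), ?_⟩⟩
  · rintro ⟨T, rfl⟩ j
    by_cases hj : j ∈ T <;> simp [indNat, hj]
  · funext j
    rcases hα j with h | h <;> simp [indNat, h]

lemma Kop_eq_sum_powerset (F : (Fin n → ℕ) → (Fin n → ℝ) → ℝ) (x : Fin n → ℝ) :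
    Kop n F x = ∑ T ∈ Finset.univ.powerset, Gop n (indNat T) (F (indNat T)) x := by
  rw [Kop, ← image_indNat_powerset_univ, Finset.sum_image fun S _ T _ h => indNat_injective h]

end Indicator

lemma eq_update_zero_add_integral_of_hasDerivAt {f f' : (Fin n → ℝ) → ℝ} {i : Fin n}
    (hf : ∀ x ∈ cubeB n, HasDerivAt (fun t : ℝ => f (update x i t)) (f' x) (x i))
    (hf' : ContinuousOn f' (cubeB n)) {x : Fin n → ℝ} (hx : x ∈ cubeB n) :
    f x = f (update x i 0) + ∫ s in (0 : ℝ)..x i, f' (update x i s) := by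
  have hderiv : ∀ t ∈ Set.uIcc 0 (x i),
      HasDerivAt (fun s => f (update x i s)) (f' (update x i t)) t := fun t ht => by
    simpa using hf _ (update_mem_cubeB_of_mem_uIcc hx i ht)
  rw [intervalIntegral.integral_eq_sub_of_hasDerivAt hderiv
    (hf'.intervalIntegrable_comp_update hx i), update_eq_self]
  ring

theorem sum_powerset_GopList_indNat (G : (Fin n → ℕ) → (Fin n → ℝ) → ℝ)
    (hcont : ∀ α ∈ Zn n, ContinuousOn (G α) (cubeB n))
    (hftc : ∀ α ∈ Zn n, ∀ i : Fin n, α i = 0 → ∀ x ∈ cubeB n,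
      G α x = G α (update x i 0) + ∫ s in (0 : ℝ)..x i, G (α + Pi.single i 1) (update x i s))
    {L : List (Fin n)} (hL : L.Nodup) {α : Fin n → ℕ} (hα : α ∈ Zn n) (hαL : ∀ i ∈ L, α i = 0)
    {x : Fin n → ℝ} (hx : x ∈ cubeB n) :
    ∑ T ∈ L.toFinset.powerset, GopList L (α + indNat T) (G (α + indNat T)) x = G α x := by
  induction L generalizing α x with
  | nil => simp
  | cons i L ih =>
    obtain ⟨hiL, hL⟩ := List.nodup_cons.1 hL
    have hαi : α i = 0 := hαL i List.mem_cons_self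
    have hαL' : ∀ j ∈ L, α j = 0 := fun j hj => hαL j (List.mem_cons_of_mem i hj)
    have hiT : ∀ T ∈ L.toFinset.powerset, i ∉ T := fun T hT hi =>
      hiL (List.mem_toFinset.1 (Finset.mem_powerset.1 hT hi))
    set β := α + Pi.single i 1
    have hβ : β ∈ Zn n := add_single_mem_Zn hα hαi
    have hβL : ∀ j ∈ L, β j = 0 := fun j hj => by
      simp [β, hαL' j hj, ne_of_mem_of_not_mem hj hiL]
    have hβT : ∀ T ∈ L.toFinset.powerset, β + indNat T ∈ Zn n := fun T hT =>
      add_indNat_mem_Zn hβ fun j hj => hβL j (List.mem_toFinset.1 (Finset.mem_powerset.1 hT hj))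
    have hsum₀ : ∑ T ∈ L.toFinset.powerset,
        GopList (i :: L) (α + indNat T) (G (α + indNat T)) x = G α (update x i 0) := by
      rw [← ih hL hα hαL' (update_mem_cubeB hx i (by norm_num))]
      exact Finset.sum_congr rfl fun T hT =>
        GopList_cons_add_indNat_of_not_mem hαi (hiT T hT) L _ x
    have hsum₁ : ∑ T ∈ L.toFinset.powerset,
        GopList (i :: L) (α + indNat (insert i T)) (G (α + indNat (insert i T))) x =
          ∫ s in (0 : ℝ)..x i, G β (update x i s) := by
      calc _ = ∑ T ∈ L.toFinset.powerset,
            ∫ s in (0 : ℝ)..x i, GopList L (β + indNat T) (G (β + indNat T)) (update x i s) := by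
            refine Finset.sum_congr rfl fun T hT => ?_
            rw [GopList_cons_add_indNat_insert hαi (hiT T hT), add_indNat_insert (hiT T hT)]
        _ = ∫ s in (0 : ℝ)..x i,
            ∑ T ∈ L.toFinset.powerset, GopList L (β + indNat T) (G (β + indNat T)) (update x i s) :=
          (intervalIntegral.integral_finsetSum fun T hT =>
            (continuousOn_GopList L _ (hcont _ (hβT T hT))).intervalIntegrable_comp_update hx i).symm
        _ = ∫ s in (0 : ℝ)..x i, G β (update x i s) :=
          intervalIntegral.integral_congr fun s hs =>
            ih hL hβ hβL (update_mem_cubeB_of_mem_uIcc hx i hs)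
    rw [List.toFinset_cons, Finset.sum_powerset_insert (by simpa using hiL), hsum₀, hsum₁,
      hftc α hα i hαi x hx]

/-- The family of mixed partial derivatives is encoded by `F : α ↦ D^α v`: `F 0 = v`,
and for `α ∈ Zⁿ` with `α i = 0`, the function `F (α + eᵢ)` is the partial derivative
of `F α` in the `i`-th variable at every point of `B`. -/
theorem Kop_recovers (n : ℕ) (v : (Fin n → ℝ) → ℝ)
    (F : (Fin n → ℕ) → (Fin n → ℝ) → ℝ) (hF0 : F 0 = v)
    (hder : ∀ α ∈ Zn n, ∀ i : Fin n, α i = 0 → ∀ x ∈ cubeB n,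
      HasDerivAt (fun t : ℝ => F α (Function.update x i t))
        (F (α + Pi.single i 1) x) (x i))
    (hcont : ∀ α ∈ Zn n, ContinuousOn (F α) (cubeB n)) :
    ∀ x ∈ cubeB n, Kop n F x = v x := by
  intro x hx
  have hftc : ∀ α ∈ Zn n, ∀ i : Fin n, α i = 0 → ∀ y ∈ cubeB n,
      F α y = F α (update y i 0) + ∫ s in (0 : ℝ)..y i, F (α + Pi.single i 1) (update y i s) :=
    fun α hα i hαi _ hy => eq_update_zero_add_integral_of_hasDerivAt (hder α hα i hαi)
      (hcont _ (add_single_mem_Zn hα hαi)) hy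
  have hexpand := sum_powerset_GopList_indNat F hcont hftc (List.nodup_finRange n)
    (α := 0) (by simp [mem_Zn_iff]) (fun _ _ => rfl) hx
  simpa only [Kop_eq_sum_powerset, Gop_eq_GopList, List.toFinset_finRange, zero_add, hF0]
    using hexpand
end

section
/- Suppose v : B → ℝ is twice continuously differentiable on the unit cube B (all partial derivatives of total order up to 2 exist and are continuous on B). Then for any ε > 0, there exists a polynomial p in n variables such that |p(x) − v(x)| ≤ ε · xᵀx for all x ∈ B. -/
/-- The squared Euclidean norm `xᵀx = ∑ₖ x_k²`. -/
def sqnorm (n : ℕ) (x : Fin n → ℝ) : ℝ := ∑ k, x k ^ 2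

/-!
Let `T` be the second-order Taylor polynomial of `v` at `0`. The remainder `r = v - T` is
`o(xᵀx)`, so `r / xᵀx`, extended by `0` at the origin, is continuous on the compact cube `B`.
By Stone–Weierstrass it is uniformly `ε`-close on `B` to a polynomial `q`, and then
`p = T + xᵀx · q` satisfies `|p - v| = xᵀx · |q - r / xᵀx| ≤ ε · xᵀx`.
-/

open Asymptotics Topology

section Taylor

variable {E F : Type*} [NormedAddCommGroup E] [NormedSpace ℝ E]
  [NormedAddCommGroup F] [NormedSpace ℝ F]

theorem hasFDerivAt_half_apply_sub_self {D : E →L[ℝ] E →L[ℝ] F}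
    (hD : ∀ v w, D v w = D w v) (a x : E) :
    HasFDerivAt (fun y ↦ (2 : ℝ)⁻¹ • D (y - a) (y - a)) (D (x - a)) x := by
  have hsub : HasFDerivAt (fun y : E ↦ y - a) (ContinuousLinearMap.id ℝ E) x :=
    (hasFDerivAt_id x).sub_const a
  refine (((D.hasFDerivAt.comp x hsub).clm_apply hsub).const_smul (2 : ℝ)⁻¹).congr_fderiv ?_
  ext w
  simp only [smul_apply, add_apply, ContinuousLinearMap.coe_comp, Function.comp_apply,
    ContinuousLinearMap.id_apply, ContinuousLinearMap.flip_apply, hD w]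
  module

/- The derivative of the remainder is `f' x - f' a - f'' a (x - a) = o(‖x - a‖)` (this uses the
symmetry of `f'' a`), and the mean value inequality upgrades this to `o(‖x - a‖ ^ 2)`. -/
theorem ContDiffAt.isLittleO_sub_taylor_two {f : E → F} {a : E} (hf : ContDiffAt ℝ 2 f a) :
    (fun x ↦ f x - f a - fderiv ℝ f a (x - a)
        - (2 : ℝ)⁻¹ • fderiv ℝ (fderiv ℝ f) a (x - a) (x - a))
      =o[𝓝 a] fun x ↦ ‖x - a‖ ^ 2 := by
  set L := fderiv ℝ f a
  set D := fderiv ℝ (fderiv ℝ f) a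
  have hD : HasFDerivAt (fderiv ℝ f) D a :=
    ((hf.fderiv_right le_rfl).differentiableAt one_ne_zero).hasFDerivAt
  have hsymm : ∀ v w, D v w = D w v := hf.isSymmSndFDerivAt (by simp)
  obtain ⟨δ, hδ, hdiff⟩ := Metric.eventually_nhds_iff_ball.1 <|
    (hf.eventually (by simp)).mono fun y hy ↦ (hy.differentiableAt two_ne_zero).hasFDerivAt
  have hball : Metric.ball a δ ∈ 𝓝 a := Metric.ball_mem_nhds a hδ
  have hderiv : ∀ x ∈ Metric.ball a δ,
      HasFDerivWithinAt (fun y ↦ f y - L (y - a) - (2 : ℝ)⁻¹ • D (y - a) (y - a))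
        (fderiv ℝ f x - L - D (x - a)) (Metric.ball a δ) x := fun x hx ↦
    (((hdiff x hx).sub (L.hasFDerivAt.comp x ((hasFDerivAt_id x).sub_const a))).sub
      (hasFDerivAt_half_apply_sub_self hsymm a x)).hasFDerivWithinAt.congr_fderiv (by ext; simp)
  have hsmall : (fun x ↦ fderiv ℝ f x - L - D (x - a)) =o[𝓝[Metric.ball a δ] a]
      fun x ↦ ‖x - a‖ ^ 1 := by
    simpa [nhdsWithin_eq_nhds.2 hball] using hD.isLittleO.norm_right
  rw [← nhdsWithin_eq_nhds.2 hball]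
  convert (convex_ball a δ).isLittleO_pow_succ (Metric.mem_ball_self hδ) hderiv hsmall using 2
  simp
  abel

end Taylor

namespace MvPolynomial

section

variable {ι R : Type*} [Fintype ι] [CommSemiring R]

theorem exists_eval_eq_linearMap (L : (ι → R) →ₗ[R] R) :
    ∃ p : MvPolynomial ι R, ∀ x, eval x p = L x := by
  classical
  exact ⟨∑ i, C (L fun j ↦ if i = j then 1 else 0) * X i, fun x ↦ by
    simp [L.pi_apply_eq_sum_univ x, mul_comm]⟩

theorem exists_eval_eq_apply_self (D : (ι → R) →ₗ[R] (ι → R) →ₗ[R] R) :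
    ∃ p : MvPolynomial ι R, ∀ x, eval x p = D x x := by
  classical
  choose q hq using fun i ↦ exists_eval_eq_linearMap (D fun j ↦ if i = j then 1 else 0)
  refine ⟨∑ i, X i * q i, fun x ↦ ?_⟩
  simp [hq, D.pi_apply_eq_sum_univ x]

end

theorem exists_eval_near_of_continuousOn {ι : Type*} {K : Set (ι → ℝ)} (hK : IsCompact K)
    {f : (ι → ℝ) → ℝ} (hf : ContinuousOn f K) {ε : ℝ} (hε : 0 < ε) :
    ∃ p : MvPolynomial ι ℝ, ∀ x ∈ K, |eval x p - f x| < ε := by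
  have : CompactSpace K := isCompact_iff_compactSpace.mp hK
  let coord : ι → C(K, ℝ) := fun i ↦
    ⟨fun x ↦ (x : ι → ℝ) i, (continuous_apply i).comp continuous_subtype_val⟩
  have heval : ∀ p (x : K), aeval coord p x = eval (x : ι → ℝ) p := fun p x ↦
    comp_aeval_apply coord (ContinuousMap.evalAlgHom ℝ ℝ x) p
  have hsep : (aeval coord : MvPolynomial ι ℝ →ₐ[ℝ] C(K, ℝ)).range.SeparatesPoints := by
    rintro x y hxy
    obtain ⟨i, hi⟩ := Function.ne_iff.1 (Subtype.coe_ne_coe.2 hxy)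
    exact ⟨_, ⟨aeval coord (X i), ⟨X i, rfl⟩, rfl⟩, by simpa [coord] using hi⟩
  obtain ⟨⟨_, p, rfl⟩, hp⟩ :=
    ContinuousMap.exists_mem_subalgebra_near_continuous_of_separatesPoints _ hsep
      (K.domRestrict f) (continuousOn_iff_continuous_domRestrict.mp hf) ε hε
  exact ⟨p, fun x hx ↦ by simpa [heval, Real.norm_eq_abs] using hp ⟨x, hx⟩⟩

end MvPolynomial

theorem isCompact_cubeB (n : ℕ) : IsCompact (cubeB n) := by
  have : cubeB n = Set.univ.pi fun _ ↦ Set.Icc (-1) 1 := by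
    ext x
    simp [cubeB, abs_le, Pi.le_def, forall_and]
  exact this ▸ isCompact_univ_pi fun _ ↦ isCompact_Icc

theorem cubeB_mem_nhds_zero (n : ℕ) : cubeB n ∈ 𝓝 (0 : Fin n → ℝ) :=
  Filter.mem_of_superset (Metric.ball_mem_nhds 0 one_pos) fun x hx i ↦
    (norm_le_pi_norm x i).trans (mem_ball_zero_iff.1 hx).le

theorem sqnorm_nonneg (n : ℕ) (x : Fin n → ℝ) : 0 ≤ sqnorm n x :=
  Finset.sum_nonneg fun _ _ ↦ sq_nonneg _

theorem sq_le_sqnorm {n : ℕ} (x : Fin n → ℝ) (i : Fin n) : x i ^ 2 ≤ sqnorm n x :=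
  Finset.single_le_sum (f := fun k ↦ x k ^ 2) (fun _ _ ↦ sq_nonneg _) (Finset.mem_univ i)

theorem sqnorm_pos {n : ℕ} {x : Fin n → ℝ} (hx : x ≠ 0) : 0 < sqnorm n x := by
  obtain ⟨i, hi⟩ := Function.ne_iff.1 hx
  exact (pow_pos (abs_pos.2 hi) 2).trans_le ((sq_abs _).le.trans (sq_le_sqnorm x i))

theorem norm_sq_le_sqnorm {n : ℕ} (x : Fin n → ℝ) : ‖x‖ ^ 2 ≤ sqnorm n x := by
  have : ‖x‖ ≤ √(sqnorm n x) :=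
    (pi_norm_le_iff_of_nonneg (Real.sqrt_nonneg _)).2 fun i ↦ Real.abs_le_sqrt (sq_le_sqnorm x i)
  simpa [Real.sq_sqrt (sqnorm_nonneg n x)] using pow_le_pow_left₀ (norm_nonneg x) this 2

@[simp]
theorem sqnorm_zero (n : ℕ) : sqnorm n 0 = 0 := by
  simp [sqnorm]

theorem isBigO_norm_sq_sqnorm {n : ℕ} (l : Filter (Fin n → ℝ)) :
    (fun x ↦ ‖x‖ ^ 2) =O[l] sqnorm n :=
  isBigO_of_le _ fun x ↦ by
    simpa [abs_of_nonneg (sqnorm_nonneg n x)] using norm_sq_le_sqnorm x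

theorem continuous_sqnorm (n : ℕ) : Continuous (sqnorm n) :=
  continuous_finsetSum _ fun k _ ↦ (continuous_apply k).pow 2

theorem continuousOn_div_sqnorm {n : ℕ} {K : Set (Fin n → ℝ)} {r : (Fin n → ℝ) → ℝ}
    (hr : ContinuousOn r K) (hr0 : r =o[𝓝 0] sqnorm n) :
    ContinuousOn (fun x ↦ r x / sqnorm n x) K := by
  intro x hx
  rcases eq_or_ne x 0 with rfl | hx0
  · -- the quotient takes the junk value `r 0 / 0 = 0` at the origin, which is its limit there
    simpa [ContinuousWithinAt] using hr0.tendsto_div_nhds_zero.mono_left nhdsWithin_le_nhds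
  · exact (hr x hx).div (continuous_sqnorm n).continuousWithinAt (sqnorm_pos hx0).ne'

theorem exists_eval_mul_sqnorm_near {n : ℕ} {K : Set (Fin n → ℝ)} (hK : IsCompact K)
    {r : (Fin n → ℝ) → ℝ} (hr : ContinuousOn r K) (hr0 : r =o[𝓝 0] sqnorm n)
    {ε : ℝ} (hε : 0 < ε) :
    ∃ q : MvPolynomial (Fin n) ℝ, ∀ x ∈ K,
      |MvPolynomial.eval x q * sqnorm n x - r x| ≤ ε * sqnorm n x := by
  obtain ⟨q, hq⟩ :=
    MvPolynomial.exists_eval_near_of_continuousOn hK (continuousOn_div_sqnorm hr hr0) hε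
  refine ⟨q, fun x hx ↦ ?_⟩
  rcases eq_or_ne x 0 with rfl | hx0
  · simp [hr0.isBigO.eq_zero_imp.self_of_nhds (sqnorm_zero n)]
  · have hs := sqnorm_pos hx0
    calc |MvPolynomial.eval x q * sqnorm n x - r x|
        = |MvPolynomial.eval x q - r x / sqnorm n x| * sqnorm n x := by
          rw [← abs_of_pos hs, ← abs_mul, abs_of_pos hs, sub_mul, div_mul_cancel₀ _ hs.ne']
      _ ≤ ε * sqnorm n x := by gcongr; exact (hq x hx).le

/-- if `v : B → ℝ` is twice continuously differentiable on the unit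
cube `B`, then for any `ε > 0` there exists a polynomial `p` in `n` variables with
`|p(x) − v(x)| ≤ ε · xᵀx` for all `x ∈ B`. -/
theorem poly_approx_weighted (n : ℕ) (v : (Fin n → ℝ) → ℝ)
    (hv : ContDiffOn ℝ 2 v (cubeB n)) (ε : ℝ) (hε : 0 < ε) :
    ∃ p : MvPolynomial (Fin n) ℝ, ∀ x ∈ cubeB n,
      |MvPolynomial.eval x p - v x| ≤ ε * sqnorm n x := by
  have hv0 : ContDiffAt ℝ 2 v 0 := hv.contDiffAt (cubeB_mem_nhds_zero n)
  set L := fderiv ℝ v 0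
  set D := fderiv ℝ (fderiv ℝ v) 0
  set r : (Fin n → ℝ) → ℝ := fun x ↦ v x - v 0 - L x - 2⁻¹ * D x x
  have hr : r =o[𝓝 0] sqnorm n := by
    have h := hv0.isLittleO_sub_taylor_two
    simp only [sub_zero] at h
    simpa using h.trans_isBigO (isBigO_norm_sq_sqnorm _)
  have hrc : ContinuousOn r (cubeB n) := by
    have := hv.continuousOn
    fun_prop
  obtain ⟨pL, hpL⟩ := MvPolynomial.exists_eval_eq_linearMap L.toLinearMap
  obtain ⟨pD, hpD⟩ := MvPolynomial.exists_eval_eq_apply_self D.toLinearMap₁₂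
  obtain ⟨q, hq⟩ := exists_eval_mul_sqnorm_near (isCompact_cubeB n) hrc hr hε
  refine ⟨.C (v 0) + pL + .C 2⁻¹ * pD + q * ∑ k, .X k ^ 2, fun x hx ↦ ?_⟩
  convert hq x hx using 2
  simp [hpL, hpD, sqnorm, r]
  ring
end
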